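/- Let k be a field of characteristic not equal to 2, A a finite-dimensional unital associative k-algebra, r ∈ A⊗A, and κ ∈ k. Set α = (r − σ(r))/2 and β = (r + σ(r))/2 in A⊗A. Suppose β is invariant, i.e. (id_A⊗L(x) − R(x)⊗id_A)(β) = 0 for all x ∈ A. Then r12·r13 + r13·r23 − r23·r12 = ((κ+1)/4)·(r13 + r31)·(r23 + r32) in A⊗A⊗A if and only if F_α(a*)·F_α(b*) − F_α(R*(F_α(a*))b* + a* L*(F_α(b*))) = κ F_β(a*)·F_β(b*) for all a*, b* ∈ A*. -/
import Mathlib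

open TensorProduct

/-- `r ↦ r₁₂ = Σ aᵢ ⊗ bᵢ ⊗ 1` in `A ⊗ (A ⊗ A)`. -/
noncomputable def e12 (k A : Type) [Field k] [Ring A] [Algebra k A] :
    A ⊗[k] A →ₗ[k] A ⊗[k] (A ⊗[k] A) :=
  TensorProduct.map LinearMap.id ((TensorProduct.mk k A A).flip 1)

/-- `r ↦ r₁₃ = Σ aᵢ ⊗ 1 ⊗ bᵢ` in `A ⊗ (A ⊗ A)`. -/
noncomputable def e13 (k A : Type) [Field k] [Ring A] [Algebra k A] :
    A ⊗[k] A →ₗ[k] A ⊗[k] (A ⊗[k] A) :=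
  TensorProduct.map LinearMap.id (TensorProduct.mk k A A 1)

/-- `r ↦ r₂₃ = Σ 1 ⊗ aᵢ ⊗ bᵢ` in `A ⊗ (A ⊗ A)`. -/
noncomputable def e23 (k A : Type) [Field k] [Ring A] [Algebra k A] :
    A ⊗[k] A →ₗ[k] A ⊗[k] (A ⊗[k] A) :=
  TensorProduct.mk k A (A ⊗[k] A) 1

/-- For `r ∈ A ⊗ A`, the induced map `F_r : A* → A`, characterized by
`b*(F_r(a*)) = (a* ⊗ b*)(r)`. -/
noncomputable def Fr {k A : Type} [Field k] [AddCommGroup A] [Module k A]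
    (r : A ⊗[k] A) (f : Module.Dual k A) : A :=
  TensorProduct.lid k A (LinearMap.rTensor A f r)

section Aux

variable {k A : Type} [Field k]

lemma contraction_zero {M : Type} [AddCommGroup A] [Module k A]
    [AddCommGroup M] [Module k M] (t : A ⊗[k] M)
    (h : ∀ f : Module.Dual k A, TensorProduct.lid k M (LinearMap.rTensor M f t) = 0) :
    t = 0 := by
  classical
  let b := Module.Basis.ofVectorSpace k A
  let E : A ⊗[k] M ≃ₗ[k] (Module.Basis.ofVectorSpaceIndex k A →₀ M) :=
    (TensorProduct.congr b.repr (LinearEquiv.refl k M)).trans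
      (TensorProduct.finsuppScalarLeft k M _)
  have hc : ∀ s : A ⊗[k] M, (TensorProduct.congr b.repr (LinearEquiv.refl k M)) s =
      LinearMap.rTensor M b.repr.toLinearMap s := by
    intro s
    induction s using TensorProduct.induction_on with
    | zero => simp
    | tmul x m => simp [TensorProduct.congr_tmul, LinearMap.rTensor_tmul]
    | add x y hx hy => simp [hx, hy]
  have hE : E t = 0 := by
    ext i
    rw [Finsupp.coe_zero, Pi.zero_apply]
    show (TensorProduct.finsuppScalarLeft k M _)
      ((TensorProduct.congr b.repr (LinearEquiv.refl k M)) t) i = _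
    rw [hc, TensorProduct.finsuppScalarLeft_apply, ← LinearMap.comp_apply,
      ← LinearMap.rTensor_comp, h]
  have := congrArg E.symm hE
  simpa using this

variable [Ring A] [Algebra k A]

/-- Contract the first two tensor factors with dual vectors. -/
noncomputable def phi (a b : Module.Dual k A) : A ⊗[k] (A ⊗[k] A) →ₗ[k] A :=
  (TensorProduct.lid k A).toLinearMap ∘ₗ LinearMap.rTensor A b ∘ₗ
    (TensorProduct.lid k (A ⊗[k] A)).toLinearMap ∘ₗ LinearMap.rTensor (A ⊗[k] A) a

@[simp] lemma phi_tmul (a b : Module.Dual k A) (x y z : A) :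
    phi a b (x ⊗ₜ[k] (y ⊗ₜ[k] z)) = a x • b y • z := by
  simp [phi, TensorProduct.smul_tmul', mul_smul]

@[simp] lemma Fr_tmul (x y : A) (f : Module.Dual k A) :
    Fr (x ⊗ₜ[k] y) f = f x • y := by
  simp [Fr]

lemma Fr_add (s t : A ⊗[k] A) (f : Module.Dual k A) :
    Fr (s + t) f = Fr s f + Fr t f := by simp [Fr]

lemma Fr_sub (s t : A ⊗[k] A) (f : Module.Dual k A) :
    Fr (s - t) f = Fr s f - Fr t f := by simp [Fr]

lemma Fr_smul (c : k) (t : A ⊗[k] A) (f : Module.Dual k A) :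
    Fr (c • t) f = c • Fr t f := by simp [Fr]

@[simp] lemma Fr_zero (f : Module.Dual k A) : Fr (0 : A ⊗[k] A) f = 0 := by simp [Fr]

lemma Fr_add_right (t : A ⊗[k] A) (f g : Module.Dual k A) :
    Fr t (f + g) = Fr t f + Fr t g := by
  simp [Fr, LinearMap.rTensor_add]

lemma Fr_sub_right (t : A ⊗[k] A) (f g : Module.Dual k A) :
    Fr t (f - g) = Fr t f - Fr t g := by
  simp [Fr, LinearMap.rTensor_sub]

@[simp] lemma Fr_zero_right (t : A ⊗[k] A) : Fr t (0 : Module.Dual k A) = 0 := by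
  simp [Fr, LinearMap.rTensor_zero]

lemma dual_mulLeft_add (a : Module.Dual k A) (x y : A) :
    a ∘ₗ LinearMap.mulLeft k (x + y) =
      a ∘ₗ LinearMap.mulLeft k x + a ∘ₗ LinearMap.mulLeft k y := by
  ext z; simp [add_mul]

lemma dual_mulLeft_sub (a : Module.Dual k A) (x y : A) :
    a ∘ₗ LinearMap.mulLeft k (x - y) =
      a ∘ₗ LinearMap.mulLeft k x - a ∘ₗ LinearMap.mulLeft k y := by
  ext z; simp [sub_mul]

lemma dual_mulLeft_zero (a : Module.Dual k A) :
    a ∘ₗ LinearMap.mulLeft k (0 : A) = 0 := by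
  ext z; simp

lemma dual_mulRight_add (b : Module.Dual k A) (x y : A) :
    b ∘ₗ LinearMap.mulRight k (x + y) =
      b ∘ₗ LinearMap.mulRight k x + b ∘ₗ LinearMap.mulRight k y := by
  ext z; simp [mul_add]

lemma dual_mulRight_zero (b : Module.Dual k A) :
    b ∘ₗ LinearMap.mulRight k (0 : A) = 0 := by
  ext z; simp

/-- `φ_{a,b}(s₁₂ t₁₃) = F_t(a ∘ L(F_{σs}(b)))`. -/
lemma phi_e12_e13 (a b : Module.Dual k A) (s t : A ⊗[k] A) :
    phi a b (e12 k A s * e13 k A t) =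
      Fr t (a ∘ₗ LinearMap.mulLeft k (Fr (TensorProduct.comm k A A s) b)) := by
  induction s using TensorProduct.induction_on with
  | zero => simp [dual_mulLeft_zero]
  | tmul x y =>
    induction t using TensorProduct.induction_on with
    | zero => simp
    | tmul u v =>
      simp only [e12, e13, TensorProduct.map_tmul, LinearMap.id_coe, id_eq,
        TensorProduct.mk_apply, LinearMap.flip_apply, Algebra.TensorProduct.tmul_mul_tmul,
        one_mul, mul_one, phi_tmul, TensorProduct.comm_tmul, Fr_tmul, LinearMap.comp_apply,
        LinearMap.mulLeft_apply, map_smul, smul_mul_assoc, map_smul]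
      rw [smul_comm]
      simp [smul_smul, mul_comm]
    | add t1 t2 h1 h2 =>
      simp only [map_add, mul_add, Fr_add] at *
      rw [h1, h2]
  | add s1 s2 h1 h2 =>
    simp only [map_add, add_mul, Fr_add, dual_mulLeft_add, Fr_add_right] at *
    rw [h1, h2]

/-- `φ_{a,b}(s₁₃ t₂₃) = F_s(a) F_t(b)`. -/
lemma phi_e13_e23 (a b : Module.Dual k A) (s t : A ⊗[k] A) :
    phi a b (e13 k A s * e23 k A t) = Fr s a * Fr t b := by
  induction s using TensorProduct.induction_on with
  | zero => simp
  | tmul x y =>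
    induction t using TensorProduct.induction_on with
    | zero => simp
    | tmul u v =>
      simp only [e13, e23, TensorProduct.map_tmul, LinearMap.id_coe, id_eq,
        TensorProduct.mk_apply, Algebra.TensorProduct.tmul_mul_tmul, one_mul, mul_one,
        phi_tmul, Fr_tmul]
      rw [smul_mul_assoc, mul_smul_comm, smul_comm]
    | add t1 t2 h1 h2 =>
      simp only [map_add, mul_add, Fr_add] at *
      rw [h1, h2]
  | add s1 s2 h1 h2 =>
    simp only [map_add, add_mul, Fr_add] at *
    rw [h1, h2]

/-- `φ_{a,b}(s₂₃ t₁₂) = F_s(b ∘ R(F_t(a)))`. -/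
lemma phi_e23_e12 (a b : Module.Dual k A) (s t : A ⊗[k] A) :
    phi a b (e23 k A s * e12 k A t) =
      Fr s (b ∘ₗ LinearMap.mulRight k (Fr t a)) := by
  induction s using TensorProduct.induction_on with
  | zero => simp
  | tmul x y =>
    induction t using TensorProduct.induction_on with
    | zero => simp [dual_mulRight_zero]
    | tmul u v =>
      simp only [e23, e12, TensorProduct.map_tmul, LinearMap.id_coe, id_eq,
        TensorProduct.mk_apply, LinearMap.flip_apply, Algebra.TensorProduct.tmul_mul_tmul,
        one_mul, mul_one, phi_tmul, Fr_tmul, LinearMap.comp_apply,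
        LinearMap.mulRight_apply, map_smul]
      rw [smul_comm]
      simp [smul_smul, mul_comm]
    | add t1 t2 h1 h2 =>
      simp only [map_add, mul_add, dual_mulRight_add, Fr_add_right, Fr_add] at *
      rw [h1, h2]
  | add s1 s2 h1 h2 =>
    simp only [map_add, add_mul, Fr_add] at *
    rw [h1, h2]

lemma Fr_map_right (g : A →ₗ[k] A) (t : A ⊗[k] A) (a : Module.Dual k A) :
    Fr (TensorProduct.map LinearMap.id g t) a = g (Fr t a) := by
  induction t using TensorProduct.induction_on with
  | zero => simp
  | tmul x y => simp
  | add t1 t2 h1 h2 => simp only [map_add, Fr_add, h1, h2]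

lemma Fr_map_left (f : A →ₗ[k] A) (t : A ⊗[k] A) (a : Module.Dual k A) :
    Fr (TensorProduct.map f LinearMap.id t) a = Fr t (a ∘ₗ f) := by
  induction t using TensorProduct.induction_on with
  | zero => simp
  | tmul x y => simp
  | add t1 t2 h1 h2 => simp only [map_add, Fr_add, h1, h2]

lemma Fr_comm_apply (t : A ⊗[k] A) (a b : Module.Dual k A) :
    b (Fr (TensorProduct.comm k A A t) a) = a (Fr t b) := by
  induction t using TensorProduct.induction_on with
  | zero => simp
  | tmul x y => simp [mul_comm]
  | add t1 t2 h1 h2 => simp only [map_add, Fr_add, h1, h2]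

lemma comm_map (f g : A →ₗ[k] A) (t : A ⊗[k] A) :
    TensorProduct.comm k A A (TensorProduct.map f g t) =
      TensorProduct.map g f (TensorProduct.comm k A A t) := by
  induction t using TensorProduct.induction_on with
  | zero => simp
  | tmul x y => simp
  | add t1 t2 h1 h2 => simp only [map_add, h1, h2]

lemma comm_comm (t : A ⊗[k] A) :
    TensorProduct.comm k A A (TensorProduct.comm k A A t) = t := by
  induction t using TensorProduct.induction_on with
  | zero => simp
  | tmul x y => simp
  | add t1 t2 h1 h2 => simp only [map_add, h1, h2]

end Aux

theorem stmt10 {k A : Type} [Field k] (hchar : (2 : k) ≠ 0)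
    [Ring A] [Algebra k A] [FiniteDimensional k A]
    (r : A ⊗[k] A) (κ : k) :
    let α : A ⊗[k] A := (2 : k)⁻¹ • (r - TensorProduct.comm k A A r)
    let β : A ⊗[k] A := (2 : k)⁻¹ • (r + TensorProduct.comm k A A r)
    -- β is invariant
    (∀ x : A,
        TensorProduct.map LinearMap.id (LinearMap.mulLeft k x) β -
          TensorProduct.map (LinearMap.mulRight k x) LinearMap.id β = 0) →
    ((e12 k A r * e13 k A r + e13 k A r * e23 k A r - e23 k A r * e12 k A r =
        ((κ + 1) / 4 : k) •
          ((e13 k A r + e13 k A (TensorProduct.comm k A A r)) *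
            (e23 k A r + e23 k A (TensorProduct.comm k A A r)))) ↔
      (∀ a b : Module.Dual k A,
        Fr α a * Fr α b -
            Fr α ((b ∘ₗ LinearMap.mulRight k (Fr α a)) +
              (a ∘ₗ LinearMap.mulLeft k (Fr α b))) =
          κ • (Fr β a * Fr β b))) := by
  intro α β hinv
  set σr := TensorProduct.comm k A A r with hσrdef
  have h4 : (4 : k) ≠ 0 := by
    have h22 : (2 : k) * 2 = 4 := by norm_num
    rw [← h22]; exact mul_ne_zero hchar hchar
  -- basic identities
  have hβcomm : TensorProduct.comm k A A β = β := by
    show TensorProduct.comm k A A ((2:k)⁻¹ • (r + σr)) = _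
    rw [map_smul, map_add, comm_comm, ← hσrdef, add_comm]
  have hrsum : r + σr = (2 : k) • β := by
    show _ = (2:k) • ((2:k)⁻¹ • (r + σr))
    rw [smul_smul, mul_inv_cancel₀ hchar, one_smul]
  have hr : r = α + β := by
    show r = (2:k)⁻¹ • (r - σr) + (2:k)⁻¹ • (r + σr)
    rw [← smul_add, sub_add_add_cancel, ← two_smul k r, smul_smul,
      inv_mul_cancel₀ hchar, one_smul]
  have hσr : σr = β - α := by
    show σr = (2:k)⁻¹ • (r + σr) - (2:k)⁻¹ • (r - σr)
    rw [← smul_sub, add_sub_sub_cancel, ← two_smul k σr, smul_smul,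
      inv_mul_cancel₀ hchar, one_smul]
  -- consequences of invariance
  have hinv' : ∀ x : A, TensorProduct.map LinearMap.id (LinearMap.mulLeft k x) β =
      TensorProduct.map (LinearMap.mulRight k x) LinearMap.id β := fun x =>
    sub_eq_zero.mp (hinv x)
  have I1 : ∀ (x : A) (a : Module.Dual k A),
      Fr β (a ∘ₗ LinearMap.mulRight k x) = x * Fr β a := by
    intro x a
    have := congrArg (fun t => Fr t a) (hinv' x)
    simpa [Fr_map_right, Fr_map_left] using this.symm
  have I2 : ∀ (x : A) (a : Module.Dual k A),
      Fr β (a ∘ₗ LinearMap.mulLeft k x) = Fr β a * x := by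
    intro x a
    have h := congrArg (TensorProduct.comm k A A) (hinv' x)
    rw [comm_map, comm_map, hβcomm] at h
    have := congrArg (fun t => Fr t a) h
    simpa [Fr_map_right, Fr_map_left] using this
  have Sym : ∀ a b : Module.Dual k A, a (Fr β b) = b (Fr β a) := by
    intro a b
    have := Fr_comm_apply β b a
    rw [hβcomm] at this
    exact this
  have C : ∀ a b : Module.Dual k A,
      a ∘ₗ LinearMap.mulLeft k (Fr β b) = b ∘ₗ LinearMap.mulRight k (Fr β a) := by
    intro a b
    ext c
    simp only [LinearMap.comp_apply, LinearMap.mulLeft_apply, LinearMap.mulRight_apply]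
    calc a (Fr β b * c) = (a ∘ₗ LinearMap.mulRight k c) (Fr β b) := by simp
      _ = b (Fr β (a ∘ₗ LinearMap.mulRight k c)) := Sym _ _
      _ = b (c * Fr β a) := by rw [I1]
  -- reduction of the tensor identity to the contracted identities
  have key : ∀ a b : Module.Dual k A,
      phi a b (e12 k A r * e13 k A r + e13 k A r * e23 k A r - e23 k A r * e12 k A r) =
        Fr r (a ∘ₗ LinearMap.mulLeft k (Fr σr b)) + Fr r a * Fr r b -
          Fr r (b ∘ₗ LinearMap.mulRight k (Fr r a)) := by
    intro a b
    rw [map_sub, map_add, phi_e12_e13, phi_e13_e23, phi_e23_e12]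
  have keyR : ∀ a b : Module.Dual k A,
      phi a b (((κ + 1) / 4 : k) •
          ((e13 k A r + e13 k A σr) * (e23 k A r + e23 k A σr))) =
        (κ + 1) • (Fr β a * Fr β b) := by
    intro a b
    have h13 : e13 k A r + e13 k A σr = (2:k) • e13 k A β := by
      rw [← map_add, hrsum, map_smul]
    have h23 : e23 k A r + e23 k A σr = (2:k) • e23 k A β := by
      rw [← map_add, hrsum, map_smul]
    rw [h13, h23, smul_mul_smul_comm, map_smul, map_smul, smul_smul, phi_e13_e23]
    congr 1
    have h22 : (2:k) * 2 = 4 := by norm_num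
    rw [h22, div_mul_cancel₀ _ h4]
  -- pointwise equivalence of the two contracted identities
  have point : ∀ a b : Module.Dual k A,
      (Fr r (a ∘ₗ LinearMap.mulLeft k (Fr σr b)) + Fr r a * Fr r b -
          Fr r (b ∘ₗ LinearMap.mulRight k (Fr r a)) = (κ + 1) • (Fr β a * Fr β b)) ↔
      (Fr α a * Fr α b -
          Fr α ((b ∘ₗ LinearMap.mulRight k (Fr α a)) + (a ∘ₗ LinearMap.mulLeft k (Fr α b))) =
        κ • (Fr β a * Fr β b)) := by
    intro a b
    have expand : Fr r (a ∘ₗ LinearMap.mulLeft k (Fr σr b)) + Fr r a * Fr r b -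
        Fr r (b ∘ₗ LinearMap.mulRight k (Fr r a)) =
        (Fr α a * Fr α b -
          Fr α ((b ∘ₗ LinearMap.mulRight k (Fr α a)) + (a ∘ₗ LinearMap.mulLeft k (Fr α b)))) +
          Fr β a * Fr β b := by
      rw [hr, hσr]
      simp only [Fr_add, Fr_sub, dual_mulLeft_sub, dual_mulLeft_add, dual_mulRight_add,
        Fr_add_right, Fr_sub_right, I1, I2]
      rw [C a b]
      noncomm_ring
    rw [expand, add_smul, one_smul]
    constructor
    · intro h; exact add_right_cancel h
    · intro h; rw [h]
  constructor
  · intro hAYBE a b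
    rw [← point a b, ← key a b, ← keyR a b, hAYBE]
  · intro hO
    rw [← sub_eq_zero]
    apply contraction_zero
    intro f
    apply contraction_zero
    intro g
    have h := (point f g).mpr (hO f g)
    rw [← key f g, ← keyR f g] at h
    have : phi f g (e12 k A r * e13 k A r + e13 k A r * e23 k A r - e23 k A r * e12 k A r -
        ((κ + 1) / 4 : k) •
          ((e13 k A r + e13 k A σr) * (e23 k A r + e23 k A σr))) = 0 := by
      rw [map_sub, h, sub_self]
    exact this
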